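/- Let N be odd and u = [[2, N],[1, (N+1)/2]]. Then u ∈ SL₂(ℤ), and the matrix U = [[u, 0],[0, (u⁻¹)ᵀ]] (block 4×4) lies in the paramodular group K(N). Moreover, for all τ₁, τ₂ in the upper half-plane, the composition of U with the Fricke involution V_N maps the matrix [[2τ₁, τ₁],[τ₁, τ₁/2 + τ₂/(2N)]] ∈ ℍ₂ to [[2τ₂, τ₂],[τ₂, τ₂/2 + τ₁/(2N)]]. -/
import Mathlib


open Matrix

/-- The standard symplectic matrix `J` over ℚ. -/
def Jmat : Matrix (Fin 4) (Fin 4) ℚ :=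
  !![0,0,1,0; 0,0,0,1; -1,0,0,0; 0,-1,0,0]

/-- `σ_N = diag(1,1,1,N)`. -/
def sigmaN (N : ℕ) : Matrix (Fin 4) (Fin 4) ℚ :=
  !![1,0,0,0; 0,1,0,0; 0,0,1,0; 0,0,0,(N : ℚ)]

/-- Membership in the paramodular group `K(N)`. -/
def memK (N : ℕ) (M : Matrix (Fin 4) (Fin 4) ℚ) : Prop :=
  Mᵀ * Jmat * M = Jmat ∧ ∀ i j, ∃ z : ℤ, ((sigmaN N)⁻¹ * M * sigmaN N) i j = (z : ℚ)

/-- The matrix `u = [[2, N], [1, (N+1)/2]]`. -/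
def uMat (N : ℕ) : Matrix (Fin 2) (Fin 2) ℚ :=
  !![2, (N : ℚ); 1, ((N : ℚ) + 1) / 2]

/-- The Fricke involution on points `[[τ,z],[z,w]]` of the Siegel upper half-space:
`V_N : [[τ,z],[z,w]] ↦ [[Nw, −z],[−z, τ/N]]`. -/
noncomputable def frickeV (N : ℕ) (X : Matrix (Fin 2) (Fin 2) ℂ) : Matrix (Fin 2) (Fin 2) ℂ :=
  !![(N : ℂ) * X 1 1, -X 0 1; -X 1 0, X 0 0 / N]

lemma uMat_det (N : ℕ) : (uMat N).det = 1 := by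
  simp [uMat, Matrix.det_fin_two_of]; ring

lemma uMat_inv (N : ℕ) : (uMat N)⁻¹ = !![((N:ℚ)+1)/2, -(N:ℚ); -1, 2] := by
  rw [Matrix.inv_def, uMat_det, Matrix.adjugate_fin_two]; simp [uMat]

lemma bigU_eq (N : ℕ) :
    (Matrix.reindex finSumFinEquiv finSumFinEquiv
      (Matrix.fromBlocks (uMat N) 0 0 ((uMat N)⁻¹)ᵀ) : Matrix (Fin 4) (Fin 4) ℚ) =
    !![2, (N:ℚ), 0, 0; 1, ((N:ℚ)+1)/2, 0, 0;
       0, 0, ((N:ℚ)+1)/2, -1; 0, 0, -(N:ℚ), 2] := by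
  rw [uMat_inv]
  ext i j
  fin_cases i <;> fin_cases j <;>
    simp [Matrix.reindex_apply, Matrix.submatrix_apply, Matrix.fromBlocks,
      finSumFinEquiv, Fin.addCases, uMat, Matrix.vecHead, Matrix.vecTail, Fin.castLT,
      Fin.subNat, show ¬((3:ℕ) < 2) by norm_num, show ((3:Fin 4):ℕ) = 3 from rfl]

lemma sigmaN_inv (N : ℕ) (hNpos : 0 < N) :
    (sigmaN N)⁻¹ = !![1,0,0,0; 0,1,0,0; 0,0,1,0; 0,0,0,((N : ℚ))⁻¹] := by
  have hN0 : (N : ℚ) ≠ 0 := Nat.cast_ne_zero.mpr hNpos.ne'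
  apply Matrix.inv_eq_right_inv
  ext i j
  fin_cases i <;> fin_cases j <;>
    simp [sigmaN, Matrix.mul_apply, Fin.sum_univ_succ, Matrix.one_apply, hN0]

set_option maxHeartbeats 1600000 in
theorem u_in_SL2_U_in_KN_and_fricke_swap (N : ℕ) (hN : Odd N) (hNpos : 0 < N) :
    -- `u ∈ SL₂(ℤ)` : integral entries and determinant 1
    (∀ i j, ∃ z : ℤ, uMat N i j = (z : ℚ)) ∧ (uMat N).det = 1 ∧
    -- `U = [[u,0],[0,(u⁻¹)ᵀ]] ∈ K(N)`
    memK N ((Matrix.reindex finSumFinEquiv finSumFinEquiv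
      (Matrix.fromBlocks (uMat N) 0 0 ((uMat N)⁻¹)ᵀ) : Matrix (Fin 4) (Fin 4) ℚ)) ∧
    -- `U ∘ V_N` maps `[[2τ₁,τ₁],[τ₁,τ₁/2+τ₂/(2N)]]` to `[[2τ₂,τ₂],[τ₂,τ₂/2+τ₁/(2N)]]`
    (∀ τ₁ τ₂ : ℂ, 0 < τ₁.im → 0 < τ₂.im →
      let A : Matrix (Fin 2) (Fin 2) ℂ := (uMat N).map (Rat.cast)
      let D : Matrix (Fin 2) (Fin 2) ℂ := (((uMat N)⁻¹)ᵀ).map (Rat.cast)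
      let X : Matrix (Fin 2) (Fin 2) ℂ :=
        !![2 * τ₁, τ₁; τ₁, τ₁ / 2 + τ₂ / (2 * N)]
      (A * frickeV N X + 0) * ((0 : Matrix (Fin 2) (Fin 2) ℂ) * frickeV N X + D)⁻¹ =
        !![2 * τ₂, τ₂; τ₂, τ₂ / 2 + τ₁ / (2 * N)]) := by
  obtain ⟨k, hk⟩ := hN
  have hkQ : ((N : ℚ) + 1) / 2 = (k : ℚ) + 1 := by
    subst hk; push_cast; ring
  have hN0 : (N : ℚ) ≠ 0 := Nat.cast_ne_zero.mpr hNpos.ne'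
  have hNC : (N : ℂ) ≠ 0 := Nat.cast_ne_zero.mpr hNpos.ne'
  refine ⟨?_, uMat_det N, ⟨?_, ?_⟩, ?_⟩
  · -- integrality of u
    have hu : uMat N = (!![2, (N:ℤ); 1, (k:ℤ)+1] : Matrix (Fin 2) (Fin 2) ℤ).map
        (Int.cast) := by
      ext i j
      fin_cases i <;> fin_cases j <;> simp [uMat, hkQ] <;> push_cast <;> ring
    intro i j
    exact ⟨!![2, (N:ℤ); 1, (k:ℤ)+1] i j, by rw [hu]; simp⟩
  · -- symplectic
    rw [bigU_eq]
    ext i j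
    fin_cases i <;> fin_cases j <;>
      simp [Jmat, Matrix.mul_apply, Fin.sum_univ_succ, Matrix.transpose_apply,
        Matrix.vecHead, Matrix.vecTail] <;> ring
  · -- integrality of σ⁻¹ U σ
    have hconj : (sigmaN N)⁻¹ * (Matrix.reindex finSumFinEquiv finSumFinEquiv
        (Matrix.fromBlocks (uMat N) 0 0 ((uMat N)⁻¹)ᵀ) : Matrix (Fin 4) (Fin 4) ℚ) *
        sigmaN N =
        (!![2, (N:ℤ), 0, 0; 1, (k:ℤ)+1, 0, 0; 0, 0, (k:ℤ)+1, -(N:ℤ); 0, 0, -1, 2] :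
          Matrix (Fin 4) (Fin 4) ℤ).map (Int.cast) := by
      rw [bigU_eq, sigmaN_inv N hNpos]
      ext i j
      fin_cases i <;> fin_cases j <;>
        simp [sigmaN, Matrix.mul_apply, Fin.sum_univ_succ, hkQ, Matrix.vecHead,
          Matrix.vecTail] <;>
        push_cast <;> field_simp
    intro i j
    exact ⟨!![2, (N:ℤ), 0, 0; 1, (k:ℤ)+1, 0, 0; 0, 0, (k:ℤ)+1, -(N:ℤ); 0, 0, -1, 2] i j,
      by rw [hconj]; simp⟩
  · -- Fricke computation
    intro τ₁ τ₂ _ _ A D X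
    have hD : ((0 : Matrix (Fin 2) (Fin 2) ℂ) * frickeV N X + D)⁻¹ =
        ((uMat N)ᵀ).map (Rat.cast) := by
      rw [Matrix.zero_mul, zero_add]
      apply Matrix.inv_eq_right_inv
      show (((uMat N)⁻¹)ᵀ).map (Rat.cast) * ((uMat N)ᵀ).map (Rat.cast) = 1
      rw [uMat_inv]
      ext i j
      fin_cases i <;> fin_cases j <;>
        simp [uMat, Matrix.mul_apply, Fin.sum_univ_succ, Matrix.one_apply,
          Matrix.transpose_apply, Matrix.vecHead, Matrix.vecTail] <;>
        (try push_cast) <;> (try field_simp) <;> (try ring) <;> (try field_simp) <;> (try ring)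
    rw [hD, add_zero]
    show A * frickeV N X * ((uMat N)ᵀ).map (Rat.cast) = _
    ext i j
    fin_cases i <;> fin_cases j <;>
      simp [A, X, uMat, frickeV, Matrix.mul_apply, Fin.sum_univ_succ,
        Matrix.transpose_apply, Matrix.vecHead, Matrix.vecTail] <;>
      (try push_cast) <;> (try field_simp) <;> (try ring) <;> (try field_simp) <;> (try ring)
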